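/- arXiv:2507.21864 — 4 statements merged into one kernel-verified Lean document; each statement's English description precedes it below -/
import Mathlib

section
/- Let k ≥ 1 and let π = (π₁, π₂) be the 2-layer drawing of W_k obtained by placing V₁ = {(x,y) ∈ V(W_k) : y odd} and V₂ = V(W_k) ∖ V₁ on the two layers, each sorted lexicographically by key (y,x). Then every row edge of W_k crosses at most k − 1 other row edges in π; that is, the subdrawing of π induced by the row edges is (k−1)-planar. -/
/-- The vertices of the graph `W_k`: the `k` rows `{1, …, k} × {1, …, 4k(3k+6)}`
together with the hair vertices `(k+1, 4ky−2)` and `(k+2, 4ky−1)` for `y ∈ {1, …, 3k+6}`. -/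
def WkVerts (k : ℕ) : Finset (ℕ × ℕ) :=
  (Finset.Icc 1 k ×ˢ Finset.Icc 1 (4 * k * (3 * k + 6))) ∪
    (Finset.Icc 1 (3 * k + 6)).image (fun y => (k + 1, 4 * k * y - 2)) ∪
    (Finset.Icc 1 (3 * k + 6)).image (fun y => (k + 2, 4 * k * y - 1))

abbrev WkVert (k : ℕ) : Type := {p : ℕ × ℕ // p ∈ WkVerts k}

/-- The edge relation of `W_k`: row edges `{(x,y), (x,y+1)}` for `x ∈ {1, …, k}`, and,
for every `y ∈ {1, …, 3k+6}`, the non-row edges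
`{(x, 4k(y−1)+4x−3), (x+1, 4k(y−1)+4x−2)}` for `x ∈ {1, …, k−1}` together with the hair
edges `{(k, 4ky−3), (k+1, 4ky−2)}` and `{(k+1, 4ky−2), (k+2, 4ky−1)}`. -/
def WkRel (k : ℕ) (p q : ℕ × ℕ) : Prop :=
  (1 ≤ p.1 ∧ p.1 ≤ k ∧ q.1 = p.1 ∧ q.2 = p.2 + 1) ∨
  (∃ y, 1 ≤ y ∧ y ≤ 3 * k + 6 ∧
    ((∃ x, 1 ≤ x ∧ x ≤ k - 1 ∧ p = (x, 4 * k * (y - 1) + 4 * x - 3) ∧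
        q = (x + 1, 4 * k * (y - 1) + 4 * x - 2)) ∨
      (p = (k, 4 * k * y - 3) ∧ q = (k + 1, 4 * k * y - 2)) ∨
      (p = (k + 1, 4 * k * y - 2) ∧ q = (k + 2, 4 * k * y - 1))))

/-- The graph `W_k`. -/
def Wk (k : ℕ) : SimpleGraph (WkVert k) :=
  SimpleGraph.fromRel fun p q => WkRel k p.val q.val

/-- An edge of `W_k` is a row edge if its endpoints lie in the same row. -/
def IsRowEdgeW (k : ℕ) (e : Sym2 (WkVert k)) : Prop :=
  e ∈ (Wk k).edgeSet ∧ ∃ u v : WkVert k, e = s(u, v) ∧ u.val.1 = v.val.1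

/-- An edge of `W_k` is a non-row edge if its endpoints lie in different rows. -/
def IsNonRowEdgeW (k : ℕ) (e : Sym2 (WkVert k)) : Prop :=
  e ∈ (Wk k).edgeSet ∧ ∃ u v : WkVert k, e = s(u, v) ∧ u.val.1 ≠ v.val.1

/-- The vertices `(x, y)` of `W_k` with `y` odd. -/
def V1 (k : ℕ) : Finset (WkVert k) :=
  (WkVerts k).attach.filter fun p => p.val.2 % 2 = 1

/-- The vertices `(x, y)` of `W_k` with `y` even. -/
def V2 (k : ℕ) : Finset (WkVert k) :=
  (WkVerts k).attach.filter fun p => p.val.2 % 2 = 0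

/-- A 2-layer drawing of a bipartite graph `G` with bipartition `(X, Y)`:
the vertices of `X` (resp. `Y`) are placed at positions `1, …, |X|` (resp. `1, …, |Y|`)
on two parallel lines, i.e. `pos` restricts to bijections `X → {1, …, |X|}` and
`Y → {1, …, |Y|}`. -/
structure TwoLayerDrawing {V : Type*} (G : SimpleGraph V) (X Y : Finset V) where
  pos : V → ℕ
  cover : ∀ v : V, v ∈ X ∨ v ∈ Y
  disj : ∀ v : V, ¬(v ∈ X ∧ v ∈ Y)
  bipart : ∀ u v : V, G.Adj u v → ((u ∈ X ∧ v ∈ Y) ∨ (u ∈ Y ∧ v ∈ X))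
  bijX : Set.BijOn pos ↑X (Set.Icc 1 X.card)
  bijY : Set.BijOn pos ↑Y (Set.Icc 1 Y.card)

/-- Two edges `{x₁, y₁}` and `{x₂, y₂}` with `x₁, x₂ ∈ X`, `y₁, y₂ ∈ Y` cross in the
drawing iff one has its `X`-endpoint to the left of the other's but its `Y`-endpoint
to the right. -/
def TwoLayerDrawing.Crosses {V : Type*} {G : SimpleGraph V} {X Y : Finset V}
    (D : TwoLayerDrawing G X Y) (e₁ e₂ : Sym2 V) : Prop :=
  ∃ x₁ y₁ x₂ y₂ : V, x₁ ∈ X ∧ x₂ ∈ X ∧ y₁ ∈ Y ∧ y₂ ∈ Y ∧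
    e₁ = s(x₁, y₁) ∧ e₂ = s(x₂, y₂) ∧
    ((D.pos x₁ < D.pos x₂ ∧ D.pos y₂ < D.pos y₁) ∨
      (D.pos x₂ < D.pos x₁ ∧ D.pos y₁ < D.pos y₂))

/-- A 2-layer drawing is `k`-planar if every edge crosses at most `k` other edges. -/
def TwoLayerDrawing.IsKPlanar {V : Type*} {G : SimpleGraph V} {X Y : Finset V}
    (D : TwoLayerDrawing G X Y) (k : ℕ) : Prop :=
  ∀ e ∈ G.edgeSet, {e' | e' ∈ G.edgeSet ∧ D.Crosses e e'}.ncard ≤ k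

/-- `G` is a 2-layer `k`-planar graph if it admits a 2-layer `k`-planar drawing with
respect to some bipartition. -/
def IsTwoLayerKPlanar {V : Type*} (G : SimpleGraph V) (k : ℕ) : Prop :=
  ∃ (X Y : Finset V) (D : TwoLayerDrawing G X Y), D.IsKPlanar k

/-- The drawing `π = (π₁, π₂)` of `W_k` sorts each layer lexicographically by
the key `(y, x)`. -/
def LexSorted {k : ℕ} (D : TwoLayerDrawing (Wk k) (V1 k) (V2 k)) : Prop :=
  ∀ u v : WkVert k, ((u ∈ V1 k ∧ v ∈ V1 k) ∨ (u ∈ V2 k ∧ v ∈ V2 k)) →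
    (D.pos u < D.pos v ↔ (u.val.2 < v.val.2 ∨ (u.val.2 = v.val.2 ∧ u.val.1 < v.val.1)))

/-! In the drawing sorted by `(y, x)`, the row edge `{(x, y), (x, y+1)}` can only cross row edges
whose endpoints share a column with one of its own, namely `{(x', y+1), (x', y+2)}` with `x' < x`
or `{(x', y-1), (x', y)}` with `x' > x`. So each of the other `k - 1` rows contributes at most one
crossing row edge. -/

section Wk

variable {k : ℕ}

@[simp]
lemma mem_V1_iff (v : WkVert k) : v ∈ V1 k ↔ v.val.2 % 2 = 1 := by
  simp [V1]

@[simp]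
lemma mem_V2_iff (v : WkVert k) : v ∈ V2 k ↔ v.val.2 % 2 = 0 := by
  simp [V2]

lemma WkRel.of_fst_eq {p q : ℕ × ℕ} (h : WkRel k p q) (hpq : p.1 = q.1) :
    1 ≤ p.1 ∧ p.1 ≤ k ∧ q = (p.1, p.2 + 1) := by
  rcases h with ⟨h₁, h₂, h₃, h₄⟩ | ⟨_, _, _, ⟨_, _, _, rfl, rfl⟩ | ⟨rfl, rfl⟩ | ⟨rfl, rfl⟩⟩
  · exact ⟨h₁, h₂, Prod.ext h₃ h₄⟩
  all_goals simp at hpq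

lemma IsRowEdgeW.exists_eq {e : Sym2 (WkVert k)} (he : IsRowEdgeW k e) :
    ∃ u v : WkVert k, e = s(u, v) ∧ 1 ≤ u.val.1 ∧ u.val.1 ≤ k ∧
      v.val = (u.val.1, u.val.2 + 1) := by
  obtain ⟨hadj, u, v, rfl, hrow⟩ := he
  rw [SimpleGraph.mem_edgeSet, Wk, SimpleGraph.fromRel_adj] at hadj
  rcases hadj.2 with h | h
  · exact ⟨u, v, rfl, h.of_fst_eq hrow⟩
  · exact ⟨v, u, Sym2.eq_swap, h.of_fst_eq hrow.symm⟩

lemma LexSorted.rowEdges_crosses {D : TwoLayerDrawing (Wk k) (V1 k) (V2 k)} (hD : LexSorted D)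
    {u v u' v' : WkVert k} (hv : v.val = (u.val.1, u.val.2 + 1))
    (hv' : v'.val = (u'.val.1, u'.val.2 + 1)) (hcr : D.Crosses s(u, v) s(u', v')) :
    (u'.val.2 = u.val.2 + 1 ∧ u'.val.1 < u.val.1) ∨
      (u.val.2 = u'.val.2 + 1 ∧ u.val.1 < u'.val.1) := by
  obtain ⟨x₁, y₁, x₂, y₂, hx₁, hx₂, hy₁, hy₂, he₁, he₂, hpos⟩ := hcr
  rw [hD x₁ x₂ (.inl ⟨hx₁, hx₂⟩), hD x₂ x₁ (.inl ⟨hx₂, hx₁⟩),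
    hD y₁ y₂ (.inr ⟨hy₁, hy₂⟩), hD y₂ y₁ (.inr ⟨hy₂, hy₁⟩)] at hpos
  rw [mem_V1_iff] at hx₁ hx₂
  rw [mem_V2_iff] at hy₁ hy₂
  rw [Sym2.eq_iff] at he₁ he₂
  rcases he₁ with ⟨rfl, rfl⟩ | ⟨rfl, rfl⟩ <;> rcases he₂ with ⟨rfl, rfl⟩ | ⟨rfl, rfl⟩ <;>
    simp only [hv, hv'] at hpos hx₁ hx₂ hy₁ hy₂ <;> omega

noncomputable def edgeRow : Sym2 (WkVert k) → ℕ :=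
  Sym2.lift ⟨fun u v => min u.val.1 v.val.1, fun _ _ => min_comm _ _⟩

lemma edgeRow_of_rowEdge {u v : WkVert k} (hv : v.val = (u.val.1, u.val.2 + 1)) :
    edgeRow s(u, v) = u.val.1 := by
  simp [edgeRow, hv]

variable {D : TwoLayerDrawing (Wk k) (V1 k) (V2 k)} {u v : WkVert k}

lemma LexSorted.mapsTo_edgeRow (hD : LexSorted D) (hv : v.val = (u.val.1, u.val.2 + 1)) :
    Set.MapsTo edgeRow {e' | IsRowEdgeW k e' ∧ D.Crosses s(u, v) e'}
      ((Finset.Icc 1 k).erase u.val.1 : Set ℕ) := by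
  rintro _ ⟨he', hcr⟩
  obtain ⟨u', v', rfl, hu₁', huk', hv'⟩ := he'.exists_eq
  have := hD.rowEdges_crosses hv hv' hcr
  simp only [edgeRow_of_rowEdge hv', Finset.coe_erase, Finset.coe_Icc, Set.mem_sdiff,
    Set.mem_Icc, Set.mem_singleton_iff]
  omega

lemma LexSorted.injOn_edgeRow (hD : LexSorted D) (hv : v.val = (u.val.1, u.val.2 + 1)) :
    Set.InjOn edgeRow {e' | IsRowEdgeW k e' ∧ D.Crosses s(u, v) e'} := by
  rintro _ ⟨he₁, hcr₁⟩ _ ⟨he₂, hcr₂⟩ hrow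
  obtain ⟨u₁, v₁, rfl, -, -, hv₁⟩ := he₁.exists_eq
  obtain ⟨u₂, v₂, rfl, -, -, hv₂⟩ := he₂.exists_eq
  rw [edgeRow_of_rowEdge hv₁, edgeRow_of_rowEdge hv₂] at hrow
  have := hD.rowEdges_crosses hv hv₁ hcr₁
  have := hD.rowEdges_crosses hv hv₂ hcr₂
  obtain rfl : u₁ = u₂ := Subtype.ext (Prod.ext hrow (by omega))
  rw [Subtype.ext (hv₁.trans hv₂.symm)]

end Wk

theorem stmt11_general (k : ℕ)
    (D : TwoLayerDrawing (Wk k) (V1 k) (V2 k)) (hD : LexSorted D) :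
    ∀ e, IsRowEdgeW k e → {e' | IsRowEdgeW k e' ∧ D.Crosses e e'}.ncard ≤ k - 1 := by
  intro e he
  obtain ⟨u, v, rfl, hu₁, huk, hv⟩ := he.exists_eq
  calc {e' | IsRowEdgeW k e' ∧ D.Crosses s(u, v) e'}.ncard
      ≤ ((Finset.Icc 1 k).erase u.val.1 : Set ℕ).ncard :=
        Set.ncard_le_ncard_of_injOn edgeRow (hD.mapsTo_edgeRow hv) (hD.injOn_edgeRow hv)
          (Finset.finite_toSet _)
    _ = k - 1 := by
        rw [Set.ncard_coe_finset, Finset.card_erase_of_mem (by simp [hu₁, huk]), Nat.card_Icc]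
        omega

theorem stmt11 (k : ℕ) (hk : 1 ≤ k)
    (D : TwoLayerDrawing (Wk k) (V1 k) (V2 k)) (hD : LexSorted D) :
    ∀ e, IsRowEdgeW k e → {e' | IsRowEdgeW k e' ∧ D.Crosses e e'}.ncard ≤ k - 1 :=
  stmt11_general k D hD
end

section
/- Let k ≥ 1 and let π = (π₁, π₂) be the 2-layer drawing of W_k obtained by placing V₁ = {(x,y) ∈ V(W_k) : y odd} and V₂ = V(W_k) ∖ V₁ on the two layers, each sorted lexicographically by key (y,x). Then no two non-row edges of W_k cross each other in π. -/
/-- Canonical form of a non-row edge, oriented so that the first endpoint has odd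
second coordinate and the second endpoint has even second coordinate. -/
def NRCanon (k : ℕ) (a b : ℕ × ℕ) : Prop :=
  ∃ y, 1 ≤ y ∧ y ≤ 3 * k + 6 ∧
    ((∃ x, 1 ≤ x ∧ x ≤ k - 1 ∧ a = (x, 4 * (k * (y - 1)) + 4 * x - 3) ∧
        b = (x + 1, 4 * (k * (y - 1)) + 4 * x - 2)) ∨
      (a = (k, 4 * (k * y) - 3) ∧ b = (k + 1, 4 * (k * y) - 2)) ∨
      (a = (k + 2, 4 * (k * y) - 1) ∧ b = (k + 1, 4 * (k * y) - 2)))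

lemma canonNR {k : ℕ} (hk : 1 ≤ k) {a b : ℕ × ℕ}
    (ha : a.2 % 2 = 1) (hb : b.2 % 2 = 0) (hne : a.1 ≠ b.1)
    (H : WkRel k a b ∨ WkRel k b a) : NRCanon k a b := by
  rcases H with H | H
  · rcases H with ⟨_, _, h3, _⟩ | ⟨y, hy1, hy2, H⟩
    · exact absurd h3.symm hne
    · have hky : 0 < k * y := Nat.mul_pos hk hy1
      rcases H with ⟨x, hx1, hx2, hpa, hpb⟩ | ⟨hpa, hpb⟩ | ⟨hpa, hpb⟩
      · exact ⟨y, hy1, hy2, Or.inl ⟨x, hx1, hx2,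
          by rw [hpa]; simp [Nat.mul_assoc], by rw [hpb]; simp [Nat.mul_assoc]⟩⟩
      · exact ⟨y, hy1, hy2, Or.inr (Or.inl
          ⟨by rw [hpa]; simp [Nat.mul_assoc], by rw [hpb]; simp [Nat.mul_assoc]⟩)⟩
      · subst hpa
        dsimp only at ha
        rw [Nat.mul_assoc] at ha
        omega
  · rcases H with ⟨_, _, h3, _⟩ | ⟨y, hy1, hy2, H⟩
    · exact absurd h3 hne
    · have hky : 0 < k * y := Nat.mul_pos hk hy1
      rcases H with ⟨x, hx1, hx2, hpb, hpa⟩ | ⟨hpb, hpa⟩ | ⟨hpb, hpa⟩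
      · subst hpb
        dsimp only at hb
        rw [Nat.mul_assoc] at hb
        omega
      · subst hpb
        dsimp only at hb
        rw [Nat.mul_assoc] at hb
        omega
      · exact ⟨y, hy1, hy2, Or.inr (Or.inr
          ⟨by rw [hpa]; simp [Nat.mul_assoc], by rw [hpb]; simp [Nat.mul_assoc]⟩)⟩

lemma masterNR {k : ℕ} (hk : 1 ≤ k) {a b a' b' : ℕ × ℕ}
    (H : NRCanon k a b) (H' : NRCanon k a' b') :
    (a.2 < a'.2 → (b.2 < b'.2 ∨ b = b')) ∧ (a.2 = a'.2 → a = a' ∧ b = b') := by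
  obtain ⟨y, hy1, _, H⟩ := H
  obtain ⟨z, hz1, _, H'⟩ := H'
  have hky : 0 < k * y := Nat.mul_pos hk hy1
  have hkz : 0 < k * z := Nat.mul_pos hk hz1
  have e1 : k * (y - 1) + k = k * y := by
    have h : y - 1 + 1 = y := by omega
    calc k * (y - 1) + k = k * (y - 1 + 1) := by ring
    _ = k * y := by rw [h]
  have e2 : k * (z - 1) + k = k * z := by
    have h : z - 1 + 1 = z := by omega
    calc k * (z - 1) + k = k * (z - 1 + 1) := by ring
    _ = k * z := by rw [h]
  rcases Nat.lt_trichotomy y z with hyz | rfl | hyz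
  · have e3 : k * y ≤ k * (z - 1) := Nat.mul_le_mul_left k (by omega)
    rcases H with ⟨x, hx1, hx2, rfl, rfl⟩ | ⟨rfl, rfl⟩ | ⟨rfl, rfl⟩ <;>
      rcases H' with ⟨x', hx1', hx2', rfl, rfl⟩ | ⟨rfl, rfl⟩ | ⟨rfl, rfl⟩ <;>
      first | (simp only [Prod.mk.injEq] <;> omega) | (simp [Prod.mk.injEq] <;> omega) | simp [Prod.mk.injEq]
  · rcases H with ⟨x, hx1, hx2, rfl, rfl⟩ | ⟨rfl, rfl⟩ | ⟨rfl, rfl⟩ <;>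
      rcases H' with ⟨x', hx1', hx2', rfl, rfl⟩ | ⟨rfl, rfl⟩ | ⟨rfl, rfl⟩ <;>
      first | (simp only [Prod.mk.injEq] <;> omega) | (simp [Prod.mk.injEq] <;> omega) | simp [Prod.mk.injEq]
  · have e3 : k * z ≤ k * (y - 1) := Nat.mul_le_mul_left k (by omega)
    rcases H with ⟨x, hx1, hx2, rfl, rfl⟩ | ⟨rfl, rfl⟩ | ⟨rfl, rfl⟩ <;>
      rcases H' with ⟨x', hx1', hx2', rfl, rfl⟩ | ⟨rfl, rfl⟩ | ⟨rfl, rfl⟩ <;>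
      first | (simp only [Prod.mk.injEq] <;> omega) | (simp [Prod.mk.injEq] <;> omega) | simp [Prod.mk.injEq]

theorem stmt12 (k : ℕ) (hk : 1 ≤ k)
    (D : TwoLayerDrawing (Wk k) (V1 k) (V2 k)) (hD : LexSorted D) :
    ∀ e e', IsNonRowEdgeW k e → IsNonRowEdgeW k e' → ¬D.Crosses e e' := by
  intro e e' he he' hc
  obtain ⟨hmem, u, v, heq, hne⟩ := he
  obtain ⟨hmem', u', v', heq', hne'⟩ := he'
  obtain ⟨x₁, y₁, x₂, y₂, hx1, hx2, hy1, hy2, rfl, rfl, hcr⟩ := hc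
  have px1 : x₁.val.2 % 2 = 1 := by simpa [V1] using hx1
  have px2 : x₂.val.2 % 2 = 1 := by simpa [V1] using hx2
  have py1 : y₁.val.2 % 2 = 0 := by simpa [V2] using hy1
  have py2 : y₂.val.2 % 2 = 0 := by simpa [V2] using hy2
  have hne1 : x₁.val.1 ≠ y₁.val.1 := by
    rcases Sym2.eq_iff.mp heq with ⟨rfl, rfl⟩ | ⟨rfl, rfl⟩
    · exact hne
    · exact hne.symm
  have hne2 : x₂.val.1 ≠ y₂.val.1 := by
    rcases Sym2.eq_iff.mp heq' with ⟨rfl, rfl⟩ | ⟨rfl, rfl⟩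
    · exact hne'
    · exact hne'.symm
  rw [SimpleGraph.mem_edgeSet] at hmem hmem'
  unfold Wk at hmem hmem'
  rw [SimpleGraph.fromRel_adj] at hmem hmem'
  have H1 : NRCanon k x₁.val y₁.val := canonNR hk px1 py1 hne1 hmem.2
  have H2 : NRCanon k x₂.val y₂.val := canonNR hk px2 py2 hne2 hmem'.2
  rcases hcr with ⟨hxlt, hylt⟩ | ⟨hxlt, hylt⟩
  · have kx := (hD x₁ x₂ (Or.inl ⟨hx1, hx2⟩)).mp hxlt
    have ky := (hD y₂ y₁ (Or.inr ⟨hy2, hy1⟩)).mp hylt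
    obtain ⟨M1, M2⟩ := masterNR hk H1 H2
    rcases kx with h | ⟨h2, h3⟩
    · rcases M1 h with h4 | h4
      · rcases ky with h5 | ⟨h5, h6⟩ <;> omega
      · have c2 : y₁.val.2 = y₂.val.2 := by rw [h4]
        have c1 : y₁.val.1 = y₂.val.1 := by rw [h4]
        rcases ky with h5 | ⟨h5, h6⟩ <;> omega
    · obtain ⟨ha, _⟩ := M2 h2
      have c1 : x₁.val.1 = x₂.val.1 := by rw [ha]
      omega
  · have kx := (hD x₂ x₁ (Or.inl ⟨hx2, hx1⟩)).mp hxlt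
    have ky := (hD y₁ y₂ (Or.inr ⟨hy1, hy2⟩)).mp hylt
    obtain ⟨M1, M2⟩ := masterNR hk H2 H1
    rcases kx with h | ⟨h2, h3⟩
    · rcases M1 h with h4 | h4
      · rcases ky with h5 | ⟨h5, h6⟩ <;> omega
      · have c2 : y₂.val.2 = y₁.val.2 := by rw [h4]
        have c1 : y₂.val.1 = y₁.val.1 := by rw [h4]
        rcases ky with h5 | ⟨h5, h6⟩ <;> omega
    · obtain ⟨ha, _⟩ := M2 h2
      have c1 : x₂.val.1 = x₁.val.1 := by rw [ha]
      omega
end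

section
/- For every integer k ≥ 1, the graph W_k has pathwidth at least k + 1. -/
/-- A path decomposition of a graph `G` with bags `B 0, …, B (n-1)` arranged along a path:
every vertex is in some bag, every edge has both endpoints in a common bag, and the bags
containing any fixed vertex form a contiguous interval. -/
def IsPathDecomp {V : Type*} (G : SimpleGraph V) (n : ℕ) (B : Fin n → Finset V) : Prop :=
  (∀ v : V, ∃ i, v ∈ B i) ∧
  (∀ u v : V, G.Adj u v → ∃ i, u ∈ B i ∧ v ∈ B i) ∧
  (∀ (v : V) (i j l : Fin n), i ≤ j → j ≤ l → v ∈ B i → v ∈ B l → v ∈ B j)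

/-- The pathwidth of `G`: the least `w` such that `G` has a path decomposition
all of whose bags have at most `w + 1` vertices. -/
noncomputable def pathwidth {V : Type*} (G : SimpleGraph V) : ℕ :=
  sInf {w | ∃ (n : ℕ) (B : Fin n → Finset V), IsPathDecomp G n B ∧ ∀ i, (B i).card ≤ w + 1}

lemma chainHit₁ {V : Type*} {G : SimpleGraph V} {n : ℕ} {B : Fin n → Finset V}
    (hd : IsPathDecomp G n B) (c : ℕ → V) :
    ∀ (m : ℕ) (a b i : Fin n), (∀ p < m, G.Adj (c p) (c (p+1))) → c 0 ∈ B a → c m ∈ B b →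
      a ≤ i → i ≤ b → ∃ p ≤ m, c p ∈ B i := by
  intro m
  induction m with
  | zero =>
    intro a b i _ ha hb hai hib
    exact ⟨0, le_refl _, hd.2.2 _ a i b hai hib ha hb⟩
  | succ m ih =>
    intro a b i hc ha hb hai hib
    obtain ⟨j, hj1, hj2⟩ := hd.2.1 _ _ (hc m (by omega))
    by_cases hij : i ≤ j
    · obtain ⟨p, hp, hcp⟩ := ih a j i (fun p hp => hc p (by omega)) ha hj1 hai hij
      exact ⟨p, by omega, hcp⟩
    · exact ⟨m+1, le_refl _, hd.2.2 _ j i b (le_of_not_ge hij) hib hj2 hb⟩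

lemma chainHit₂ {V : Type*} {G : SimpleGraph V} {n : ℕ} {B : Fin n → Finset V}
    (hd : IsPathDecomp G n B) (c : ℕ → V) (m : ℕ) (a b i : Fin n)
    (hc : ∀ p < m, G.Adj (c p) (c (p+1))) (ha : c 0 ∈ B a) (hb : c m ∈ B b)
    (hbi : b ≤ i) (hia : i ≤ a) : ∃ p ≤ m, c p ∈ B i := by
  obtain ⟨p, hp, h⟩ := chainHit₁ hd (fun q => c (m - q)) m b a i
    (fun q hq => by
      have h' := (hc (m - (q+1)) (by omega)).symm
      have e : m - (q+1) + 1 = m - q := by omega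
      rw [e] at h'
      simpa using h')
    (by simpa using hb) (by simpa using ha) hbi hia
  exact ⟨m - p, by omega, h⟩


lemma memRow {k x j : ℕ} (hx1 : 1 ≤ x) (hx2 : x ≤ k) (hj1 : 1 ≤ j)
    (hj2 : j ≤ 4 * k * (3 * k + 6)) : (x, j) ∈ WkVerts k := by
  unfold WkVerts
  rw [Finset.mem_union, Finset.mem_union]
  left; left
  rw [Finset.mem_product]
  simp [Finset.mem_Icc, hx1, hx2, hj1, hj2]

lemma memH1 {k y : ℕ} (hy1 : 1 ≤ y) (hy2 : y ≤ 3 * k + 6) :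
    (k + 1, 4 * k * y - 2) ∈ WkVerts k := by
  unfold WkVerts
  rw [Finset.mem_union]
  left
  rw [Finset.mem_union]
  right
  rw [Finset.mem_image]
  exact ⟨y, Finset.mem_Icc.2 ⟨hy1, hy2⟩, rfl⟩

lemma memH2 {k y : ℕ} (hy1 : 1 ≤ y) (hy2 : y ≤ 3 * k + 6) :
    (k + 2, 4 * k * y - 1) ∈ WkVerts k := by
  unfold WkVerts
  rw [Finset.mem_union]
  right
  rw [Finset.mem_image]
  exact ⟨y, Finset.mem_Icc.2 ⟨hy1, hy2⟩, rfl⟩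

lemma vertRow {k : ℕ} {v : ℕ × ℕ} (hv : v ∈ WkVerts k) (h : v.1 ≤ k) :
    1 ≤ v.1 ∧ v.1 ≤ k ∧ 1 ≤ v.2 ∧ v.2 ≤ 4 * k * (3 * k + 6) := by
  unfold WkVerts at hv
  rw [Finset.mem_union, Finset.mem_union] at hv
  rcases hv with (hv | hv) | hv
  · rw [Finset.mem_product, Finset.mem_Icc, Finset.mem_Icc] at hv
    exact ⟨hv.1.1, hv.1.2, hv.2.1, hv.2.2⟩
  · rw [Finset.mem_image] at hv
    obtain ⟨y, _, hy⟩ := hv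
    have : v.1 = k + 1 := by rw [← hy]
    omega
  · rw [Finset.mem_image] at hv
    obtain ⟨y, _, hy⟩ := hv
    have : v.1 = k + 2 := by rw [← hy]
    omega

lemma adj_of_rel {k : ℕ} {u v : WkVert k} (h : WkRel k u.val v.val)
    (hne : u.val ≠ v.val) : (Wk k).Adj u v := by
  rw [Wk, SimpleGraph.fromRel_adj]
  exact ⟨fun e => hne (congrArg Subtype.val e), Or.inl h⟩

lemma adjRow {k : ℕ} (u v : WkVert k) (x j : ℕ) (hu : u.val = (x, j))
    (hv : v.val = (x, j + 1)) (hx1 : 1 ≤ x) (hx2 : x ≤ k) : (Wk k).Adj u v := by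
  apply adj_of_rel
  · rw [hu, hv]; exact Or.inl ⟨hx1, hx2, rfl, rfl⟩
  · rw [hu, hv]; intro h; simp at h

/-- The staircase path in block with base column `b`:
position 0 is `(1, b+1)`, positions `1..4k-4` walk down through the rows,
position `4k-3` and `4k-2` are the hair vertices. -/
def stair (k b p : ℕ) : ℕ × ℕ :=
  if p = 0 then (1, b + 1)
  else if p ≤ 4*k-4 then (2 + (p-1)/4, b + p + 1)
  else if p = 4*k-3 then (k+1, b + 4*k - 2)
  else (k+2, b + 4*k - 1)

lemma stair_snd {k b p : ℕ} (hk : 1 ≤ k) (hp : p ≤ 4*k-2) :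
    (stair k b p).2 = b + p + 1 := by
  unfold stair
  split_ifs <;> simp <;> omega

lemma stair_fst4 {k b x : ℕ} (hx1 : 1 ≤ x) (hx2 : x ≤ k) :
    stair k b (4*x-4) = (x, b + 4*x - 3) := by
  unfold stair
  rcases Nat.lt_or_ge x 2 with hx | hx
  · have : x = 1 := by omega
    subst this
    rw [if_pos (by omega)]
    rw [Prod.ext_iff]
    constructor <;> simp <;> omega
  · rw [if_neg (by omega), if_pos (by omega)]
    rw [Prod.ext_iff]
    constructor <;> simp <;> omega

lemma stair_mem {k y b p : ℕ} (hk : 1 ≤ k) (hy1 : 1 ≤ y) (hy2 : y ≤ 3*k+6)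
    (hE : 4*k*y = b + 4*k) (hL : b + 4*k ≤ 4*k*(3*k+6)) (hp : p ≤ 4*k-2) :
    stair k b p ∈ WkVerts k := by
  unfold stair
  split_ifs with h1 h2 h3
  · exact memRow (by omega) hk (by omega) (by omega)
  · exact memRow (by omega) (by omega) (by omega) (by omega)
  · have he : ((k+1 : ℕ), b + 4*k - 2) = ((k+1 : ℕ), 4*k*y - 2) := by
      rw [Prod.ext_iff]; constructor <;> simp <;> omega
    rw [he]; exact memH1 hy1 hy2
  · have he : ((k+2 : ℕ), b + 4*k - 1) = ((k+2 : ℕ), 4*k*y - 1) := by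
      rw [Prod.ext_iff]; constructor <;> simp <;> omega
    rw [he]; exact memH2 hy1 hy2

lemma stair_rel {k y b p : ℕ} (hk : 1 ≤ k) (hy1 : 1 ≤ y) (hy2 : y ≤ 3*k+6)
    (hE : 4*k*y = b + 4*k) (hb : 4*k*(y-1) = b) (hp : p + 1 ≤ 4*k-2) :
    WkRel k (stair k b p) (stair k b (p+1)) := by
  have e0 : ∀ q, q = 0 → stair k b q = (1, b+1) := by
    intro q hq; subst hq; simp [stair]
  have em : ∀ q, 1 ≤ q → q ≤ 4*k-4 → stair k b q = (2 + (q-1)/4, b + q + 1) := by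
    intro q h1 h2; unfold stair; rw [if_neg (by omega), if_pos h2]
  have eh1 : ∀ q, q = 4*k-3 → stair k b q = (k+1, b + 4*k - 2) := by
    intro q hq; unfold stair; rw [if_neg (by omega), if_neg (by omega), if_pos hq]
  have eh2 : ∀ q, q = 4*k-2 → stair k b q = (k+2, b + 4*k - 1) := by
    intro q hq; unfold stair; rw [if_neg (by omega), if_neg (by omega), if_neg (by omega)]
  by_cases h0 : p = 0
  · subst h0
    by_cases hk1 : k = 1
    · -- k = 1 : position 1 is already the first hair vertex
      rw [e0 0 rfl, eh1 1 (by omega)]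
      right
      refine ⟨y, hy1, hy2, Or.inr (Or.inl ⟨?_, ?_⟩)⟩
      · rw [Prod.ext_iff]; constructor <;> simp <;> omega
      · rw [Prod.ext_iff]; constructor <;> simp <;> omega
    · -- k ≥ 2 : diagonal edge from row 1 to row 2
      rw [e0 0 rfl, em 1 (by omega) (by omega)]
      right
      refine ⟨y, hy1, hy2, Or.inl ⟨1, by omega, by omega, ?_, ?_⟩⟩
      · rw [hb, Prod.ext_iff]; constructor <;> simp <;> omega
      · rw [hb, Prod.ext_iff]; constructor <;> simp <;> omega
  · by_cases hA : p + 1 ≤ 4*k-4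
    · by_cases hM : p % 4 = 0
      · -- diagonal edge
        rw [em p (by omega) (by omega), em (p+1) (by omega) hA]
        right
        refine ⟨y, hy1, hy2, Or.inl ⟨1 + p/4, by omega, by omega, ?_, ?_⟩⟩
        · rw [hb, Prod.ext_iff]; constructor <;> simp <;> omega
        · rw [hb, Prod.ext_iff]; constructor <;> simp <;> omega
      · -- row edge
        rw [em p (by omega) (by omega), em (p+1) (by omega) hA]
        left
        refine ⟨by omega, by omega, by simp; omega, by simp; omega⟩
    · by_cases hB : p + 1 = 4*k-3
      · -- first hair edge (k ≥ 2 since p ≥ 1)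
        rw [em p (by omega) (by omega), eh1 (p+1) hB]
        right
        refine ⟨y, hy1, hy2, Or.inr (Or.inl ⟨?_, ?_⟩)⟩
        · rw [Prod.ext_iff]; constructor <;> simp <;> omega
        · rw [Prod.ext_iff]; constructor <;> simp <;> omega
      · -- second hair edge : p = 4k-3
        rw [eh1 p (by omega), eh2 (p+1) (by omega)]
        right
        refine ⟨y, hy1, hy2, Or.inr (Or.inr ⟨?_, ?_⟩)⟩
        · rw [Prod.ext_iff]; constructor <;> simp <;> omega
        · rw [Prod.ext_iff]; constructor <;> simp <;> omega

def rowPt (k x j : ℕ) : ℕ × ℕ := (x, min (max j 1) (4*k*(3*k+6)))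

lemma rowPt_mem {k x : ℕ} (j : ℕ) (hk : 1 ≤ k) (hx1 : 1 ≤ x) (hx2 : x ≤ k) :
    rowPt k x j ∈ WkVerts k := by
  have h1 : (1:ℕ) ≤ 4*k*(3*k+6) := by nlinarith
  exact memRow hx1 hx2 (by omega) (by omega)

lemma rowPt_eq {k x j : ℕ} (h1 : 1 ≤ j) (h2 : j ≤ 4*k*(3*k+6)) : rowPt k x j = (x, j) := by
  unfold rowPt
  rw [Prod.ext_iff]
  exact ⟨rfl, by simp; omega⟩

def rowC (k x lo : ℕ) (hk : 1 ≤ k) (hx1 : 1 ≤ x) (hx2 : x ≤ k) : ℕ → WkVert k :=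
  fun p => ⟨rowPt k x (lo + p), rowPt_mem _ hk hx1 hx2⟩

lemma rowHit {k n : ℕ} {B : Fin n → Finset (WkVert k)} (hd : IsPathDecomp (Wk k) n B)
    (hk : 1 ≤ k) {x : ℕ} (hx1 : 1 ≤ x) (hx2 : x ≤ k) {u v : WkVert k}
    (hu : (u : ℕ × ℕ).1 = x) (hv : (v : ℕ × ℕ).1 = x) {a b i : Fin n}
    (hua : u ∈ B a) (hvb : v ∈ B b) (hai : a ≤ i) (hib : i ≤ b) :
    ∃ w ∈ B i, (w : ℕ × ℕ).1 = x := by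
  obtain ⟨_, _, hu3, hu4⟩ := vertRow u.2 (by omega)
  obtain ⟨_, _, hv3, hv4⟩ := vertRow v.2 (by omega)
  rcases le_total (u : ℕ × ℕ).2 (v : ℕ × ℕ).2 with hord | hord
  · set lo := (u : ℕ × ℕ).2 with hlo
    set hi := (v : ℕ × ℕ).2 with hhi
    set c := rowC k x lo hk hx1 hx2 with hc
    have hcv : ∀ p, (c p : ℕ × ℕ) = rowPt k x (lo + p) := fun p => rfl
    have hadj : ∀ p < hi - lo, (Wk k).Adj (c p) (c (p+1)) := by
      intro p hp
      apply adjRow (c p) (c (p+1)) x (lo + p)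
      · rw [hcv, rowPt_eq (by omega) (by omega)]
      · rw [hcv, rowPt_eq (by omega) (by omega)]
        rw [Prod.ext_iff]
        exact ⟨rfl, by omega⟩
      · exact hx1
      · exact hx2
    have hc0 : c 0 = u := by
      apply Subtype.ext
      rw [hcv, rowPt_eq (by omega) (by omega)]
      rw [Prod.ext_iff]
      exact ⟨hu.symm, by omega⟩
    have hcm : c (hi - lo) = v := by
      apply Subtype.ext
      rw [hcv, rowPt_eq (by omega) (by omega)]
      rw [Prod.ext_iff]
      exact ⟨hv.symm, by omega⟩
    obtain ⟨p, _, hp⟩ := chainHit₁ hd c (hi - lo) a b i hadj (hc0 ▸ hua) (hcm ▸ hvb) hai hib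
    exact ⟨c p, hp, rfl⟩
  · set lo := (v : ℕ × ℕ).2 with hlo
    set hi := (u : ℕ × ℕ).2 with hhi
    set c := rowC k x lo hk hx1 hx2 with hc
    have hcv : ∀ p, (c p : ℕ × ℕ) = rowPt k x (lo + p) := fun p => rfl
    have hadj : ∀ p < hi - lo, (Wk k).Adj (c p) (c (p+1)) := by
      intro p hp
      apply adjRow (c p) (c (p+1)) x (lo + p)
      · rw [hcv, rowPt_eq (by omega) (by omega)]
      · rw [hcv, rowPt_eq (by omega) (by omega)]
        rw [Prod.ext_iff]
        exact ⟨rfl, by omega⟩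
      · exact hx1
      · exact hx2
    have hc0 : c 0 = v := by
      apply Subtype.ext
      rw [hcv, rowPt_eq (by omega) (by omega)]
      rw [Prod.ext_iff]
      exact ⟨hv.symm, by omega⟩
    have hcm : c (hi - lo) = u := by
      apply Subtype.ext
      rw [hcv, rowPt_eq (by omega) (by omega)]
      rw [Prod.ext_iff]
      exact ⟨hu.symm, by omega⟩
    obtain ⟨p, _, hp⟩ := chainHit₂ hd c (hi - lo) b a i hadj (hc0 ▸ hvb) (hcm ▸ hua) hai hib
    exact ⟨c p, hp, rfl⟩

lemma stairEscape {k n : ℕ} {B : Fin n → Finset (WkVert k)} (hd : IsPathDecomp (Wk k) n B)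
    (hk : 1 ≤ k) {y x₀ : ℕ} (hy1 : 1 ≤ y) (hy2 : y ≤ 3*k+6)
    (hx₀1 : 1 ≤ x₀) (hx₀2 : x₀ ≤ k) (ty i : Fin n)
    (hty : (⟨(k+2, 4*k*y-1), memH2 hy1 hy2⟩ : WkVert k) ∈ B ty)
    (hcase : ((∀ (v : WkVert k) (a : Fin n), v ∈ B a → (v : ℕ × ℕ).1 = x₀ → i ≤ a) ∧ ty ≤ i) ∨
      ((∀ (v : WkVert k) (a : Fin n), v ∈ B a → (v : ℕ × ℕ).1 = x₀ → a ≤ i) ∧ i ≤ ty)) :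
    ∃ z : WkVert k, z ∈ B i ∧ 4*k*(y-1) < (z : ℕ × ℕ).2 ∧ (z : ℕ × ℕ).2 ≤ 4*k*y := by
  set b := 4*k*(y-1) with hbdef
  have hE : 4*k*y = b + 4*k := by
    rw [hbdef]
    conv_lhs => rw [show y = y-1+1 by omega]
    ring
  have hLb : b + 4*k ≤ 4*k*(3*k+6) := by
    rw [← hE]
    exact Nat.mul_le_mul le_rfl hy2
  set s := 4*x₀ - 4 with hsdef
  set m := (4*k-2) - s with hmdef
  set c : ℕ → WkVert k :=
    fun p => ⟨stair k b (min (s + p) (4*k-2)), stair_mem hk hy1 hy2 hE hLb (min_le_right _ _)⟩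
    with hcdef
  have hcv : ∀ p, (c p : ℕ × ℕ) = stair k b (min (s + p) (4*k-2)) := fun p => rfl
  have hadj : ∀ p < m, (Wk k).Adj (c p) (c (p+1)) := by
    intro p hp
    have e1 : min (s + p) (4*k-2) = s + p := by omega
    have e2 : min (s + (p+1)) (4*k-2) = (s + p) + 1 := by omega
    apply adj_of_rel
    · show WkRel k (c p : ℕ × ℕ) (c (p+1) : ℕ × ℕ)
      rw [hcv, hcv, e1, e2]
      exact stair_rel hk hy1 hy2 hE hbdef.symm (by omega)
    · intro he
      have h1 := stair_snd (k := k) (b := b) (p := s + p) hk (by omega)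
      have h2 := stair_snd (k := k) (b := b) (p := s + p + 1) hk (by omega)
      rw [hcv, hcv, e1, e2] at he
      rw [he, h2] at h1
      omega
  have hc0 : (c 0 : ℕ × ℕ) = (x₀, b + 4*x₀ - 3) := by
    rw [hcv]
    rw [show min (s + 0) (4*k-2) = 4*x₀-4 by omega]
    exact stair_fst4 hx₀1 hx₀2
  have hcm : c m = ⟨((k+2 : ℕ), 4*k*y - 1), memH2 hy1 hy2⟩ := by
    apply Subtype.ext
    rw [hcv]
    rw [show min (s + m) (4*k-2) = 4*k-2 by omega]
    show stair k b (4*k-2) = _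
    unfold stair
    rw [if_neg (by omega), if_neg (by omega), if_neg (by omega)]
    rw [Prod.ext_iff]
    exact ⟨rfl, by simp; omega⟩
  obtain ⟨a, ha⟩ := hd.1 (c 0)
  have hfst : (c 0 : ℕ × ℕ).1 = x₀ := by rw [hc0]
  have hmain : ∃ p ≤ m, c p ∈ B i := by
    rcases hcase with ⟨hge, hty'⟩ | ⟨hle, hty'⟩
    · exact chainHit₂ hd c m a ty i hadj ha (hcm ▸ hty) hty' (hge (c 0) a ha hfst)
    · exact chainHit₁ hd c m a ty i hadj ha (hcm ▸ hty) (hle (c 0) a ha hfst) hty'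
  obtain ⟨p, hpm, hpB⟩ := hmain
  have hs := stair_snd (k := k) (b := b) (p := min (s + p) (4*k-2)) hk (min_le_right _ _)
  rw [← hcv] at hs
  refine ⟨c p, hpB, by omega, by rw [hE]; omega⟩

lemma wk_main {k : ℕ} (hk : 1 ≤ k) {n : ℕ} {B : Fin n → Finset (WkVert k)}
    (hd : IsPathDecomp (Wk k) n B) (hw : ∀ i, (B i).card ≤ k + 1) : False := by
  classical
  have hL1 : (1:ℕ) ≤ 4*k*(3*k+6) := by nlinarith
  set v11 : WkVert k := ⟨(1,1), memRow le_rfl hk le_rfl hL1⟩ with hv11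
  obtain ⟨idef, _⟩ := hd.1 v11
  have hn : 0 < n := idef.pos
  -- hit sets of the rows
  set H : ℕ → Finset (Fin n) :=
    fun x => Finset.univ.filter (fun i => ∃ v ∈ B i, (v : ℕ × ℕ).1 = x) with hH
  have hHmem : ∀ (x : ℕ) (i : Fin n), i ∈ H x ↔ ∃ v ∈ B i, (v : ℕ × ℕ).1 = x := by
    intro x i; rw [hH]; simp
  have hHne : ∀ x, 1 ≤ x → x ≤ k → (H x).Nonempty := by
    intro x h1 h2
    obtain ⟨i, hi⟩ := hd.1 ⟨(x,1), memRow h1 h2 le_rfl hL1⟩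
    exact ⟨i, (hHmem x i).2 ⟨_, hi, rfl⟩⟩
  have hfex : ∀ x, ∃ i : Fin n, 1 ≤ x → x ≤ k → (i ∈ H x ∧ ∀ j ∈ H x, i ≤ j) := by
    intro x
    by_cases h : 1 ≤ x ∧ x ≤ k
    · exact ⟨(H x).min' (hHne x h.1 h.2), fun _ _ =>
        ⟨Finset.min'_mem _ _, fun j hj => Finset.min'_le _ j hj⟩⟩
    · exact ⟨⟨0, hn⟩, fun h1 h2 => absurd ⟨h1, h2⟩ h⟩
  choose f hf using hfex
  have hgex : ∀ x, ∃ i : Fin n, 1 ≤ x → x ≤ k → (i ∈ H x ∧ ∀ j ∈ H x, j ≤ i) := by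
    intro x
    by_cases h : 1 ≤ x ∧ x ≤ k
    · exact ⟨(H x).max' (hHne x h.1 h.2), fun _ _ =>
        ⟨Finset.max'_mem _ _, fun j hj => Finset.le_max' _ j hj⟩⟩
    · exact ⟨⟨0, hn⟩, fun h1 h2 => absurd ⟨h1, h2⟩ h⟩
  choose g hg using hgex
  have hIcc : (Finset.Icc 1 k).Nonempty := ⟨1, Finset.mem_Icc.2 ⟨le_rfl, hk⟩⟩
  set F := ((Finset.Icc 1 k).image f).max' (hIcc.image f) with hF
  obtain ⟨x₀, hx₀I, hx₀F⟩ := Finset.mem_image.1 (Finset.max'_mem _ (hIcc.image f))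
  obtain ⟨hx₀1, hx₀2⟩ := Finset.mem_Icc.1 hx₀I
  have hFge : ∀ x, 1 ≤ x → x ≤ k → f x ≤ F :=
    fun x h1 h2 => Finset.le_max' _ _ (Finset.mem_image_of_mem f (Finset.mem_Icc.2 ⟨h1, h2⟩))
  set G := ((Finset.Icc 1 k).image g).min' (hIcc.image g) with hG
  obtain ⟨x₁, hx₁I, hx₁G⟩ := Finset.mem_image.1 (Finset.min'_mem _ (hIcc.image g))
  obtain ⟨hx₁1, hx₁2⟩ := Finset.mem_Icc.1 hx₁I
  have hGle : ∀ x, 1 ≤ x → x ≤ k → G ≤ g x :=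
    fun x h1 h2 => Finset.min'_le _ _ (Finset.mem_image_of_mem g (Finset.mem_Icc.2 ⟨h1, h2⟩))
  -- bags containing the hair edges
  have hhair : ∀ y : ℕ, ∃ i : Fin n, ∀ (h1 : 1 ≤ y) (h2 : y ≤ 3*k+6),
      (⟨(k+1, 4*k*y-2), memH1 h1 h2⟩ : WkVert k) ∈ B i ∧
      (⟨(k+2, 4*k*y-1), memH2 h1 h2⟩ : WkVert k) ∈ B i := by
    intro y
    by_cases h : 1 ≤ y ∧ y ≤ 3*k+6
    · have hadj : (Wk k).Adj ⟨(k+1, 4*k*y-2), memH1 h.1 h.2⟩ ⟨(k+2, 4*k*y-1), memH2 h.1 h.2⟩ := by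
        apply adj_of_rel
        · exact Or.inr ⟨y, h.1, h.2, Or.inr (Or.inr ⟨rfl, rfl⟩)⟩
        · intro he
          have := congrArg Prod.fst he
          simp at this
      obtain ⟨i, hi1, hi2⟩ := hd.2.1 _ _ hadj
      exact ⟨i, fun _ _ => ⟨hi1, hi2⟩⟩
    · exact ⟨⟨0, hn⟩, fun h1 h2 => absurd ⟨h1, h2⟩ h⟩
  choose t ht using hhair
  -- no hair edge is processed in the middle period
  have hmid : ∀ y, 1 ≤ y → y ≤ 3*k+6 → t y < F ∨ G < t y := by
    intro y hy1 hy2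
    by_contra hcon
    push_neg at hcon
    obtain ⟨hF1, hG1⟩ := hcon
    have hrow : ∀ x, ∃ v : WkVert k, 1 ≤ x → x ≤ k →
        (v ∈ B (t y) ∧ (v : ℕ × ℕ).1 = x) := by
      intro x
      by_cases hx : 1 ≤ x ∧ x ≤ k
      · obtain ⟨hfH, _⟩ := hf x hx.1 hx.2
        obtain ⟨hgH, _⟩ := hg x hx.1 hx.2
        obtain ⟨u, huB, hu1⟩ := (hHmem x (f x)).1 hfH
        obtain ⟨v, hvB, hv1⟩ := (hHmem x (g x)).1 hgH
        have h1 : f x ≤ t y := le_trans (hFge x hx.1 hx.2) hF1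
        have h2 : t y ≤ g x := le_trans hG1 (hGle x hx.1 hx.2)
        obtain ⟨w, hw1, hw2⟩ := rowHit hd hk hx.1 hx.2 hu1 hv1 huB hvB h1 h2
        exact ⟨w, fun _ _ => ⟨hw1, hw2⟩⟩
      · exact ⟨v11, fun h1 h2 => absurd ⟨h1, h2⟩ hx⟩
    choose r hr using hrow
    set gg : ℕ → WkVert k := fun x =>
      if x ≤ k then r x
      else if x = k+1 then ⟨(k+1, 4*k*y-2), memH1 hy1 hy2⟩
      else ⟨(k+2, 4*k*y-1), memH2 hy1 hy2⟩ with hgg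
    have hfst : ∀ x, 1 ≤ x → x ≤ k+2 → (gg x : ℕ × ℕ).1 = x ∧ gg x ∈ B (t y) := by
      intro x h1 h2
      by_cases hxk : x ≤ k
      · have e : gg x = r x := by rw [hgg]; simp [hxk]
        rw [e]
        exact ⟨(hr x h1 hxk).2, (hr x h1 hxk).1⟩
      · by_cases hx1 : x = k+1
        · have e : gg x = ⟨(k+1, 4*k*y-2), memH1 hy1 hy2⟩ := by rw [hgg]; simp [hxk, hx1]
          rw [e]
          exact ⟨by simp [hx1], (ht y hy1 hy2).1⟩
        · have hx2 : x = k+2 := by omega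
          have e : gg x = ⟨(k+2, 4*k*y-1), memH2 hy1 hy2⟩ := by rw [hgg]; simp [hxk, hx1]
          rw [e]
          exact ⟨by simp [hx2], (ht y hy1 hy2).2⟩
    have hcard : (Finset.Icc 1 (k+2)).card ≤ (B (t y)).card := by
      apply Finset.card_le_card_of_injOn gg
      · intro x hx
        obtain ⟨h1, h2⟩ := Finset.mem_Icc.1 hx
        exact (hfst x h1 h2).2
      · intro x hx x' hx' he
        obtain ⟨h1, h2⟩ := Finset.mem_Icc.1 hx
        obtain ⟨h1', h2'⟩ := Finset.mem_Icc.1 hx'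
        have := (hfst x h1 h2).1
        rw [he, (hfst x' h1' h2').1] at this
        omega
    rw [Nat.card_Icc] at hcard
    have := hw (t y)
    omega
  -- the sets of early and late hairs
  set A := (Finset.Icc 1 (3*k+6)).filter (fun y => t y < F) with hA
  set C := (Finset.Icc 1 (3*k+6)).filter (fun y => G < t y) with hC
  have hAcard : A.card ≤ k + 1 := by
    rcases Finset.eq_empty_or_nonempty A with hemp | ⟨y₀, hy₀⟩
    · rw [hemp]; simp
    · rw [hA, Finset.mem_filter] at hy₀
      have hF1 : 1 ≤ (F : ℕ) := by
        have := hy₀.2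
        rw [Fin.lt_def] at this
        omega
      set i₀ : Fin n := ⟨(F : ℕ) - 1, by omega⟩ with hi₀
      have hzex : ∀ y, ∃ z : WkVert k, y ∈ A →
          (z ∈ B i₀ ∧ 4*k*(y-1) < (z : ℕ × ℕ).2 ∧ (z : ℕ × ℕ).2 ≤ 4*k*y) := by
        intro y
        by_cases hy : y ∈ A
        · rw [hA, Finset.mem_filter, Finset.mem_Icc] at hy
          obtain ⟨⟨hy1, hy2⟩, hty⟩ := hy
          obtain ⟨z, hz⟩ := stairEscape hd hk hy1 hy2 hx₀1 hx₀2 (t y) i₀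
            (ht y hy1 hy2).2
            (Or.inl ⟨fun v a hva hvx => by
                have haH : a ∈ H x₀ := (hHmem x₀ a).2 ⟨v, hva, hvx⟩
                have h1 : f x₀ ≤ a := (hf x₀ hx₀1 hx₀2).2 a haH
                rw [hx₀F] at h1
                rw [Fin.le_def] at h1 ⊢
                simp only [hi₀]
                omega,
              by
                rw [Fin.lt_def] at hty
                rw [Fin.le_def]
                simp only [hi₀]
                omega⟩)
          exact ⟨z, fun _ => hz⟩
        · exact ⟨v11, fun h => absurd h hy⟩
      choose z hz using hzex
      have hcard : A.card ≤ (B i₀).card := by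
        apply Finset.card_le_card_of_injOn z
        · intro y hy
          exact (hz y hy).1
        · intro y hy y' hy' he
          by_contra hne
          have hcol : (z y : ℕ × ℕ).2 = (z y' : ℕ × ℕ).2 := by rw [he]
          rcases lt_or_gt_of_ne hne with hlt | hlt
          · have hmul : 4*k*y ≤ 4*k*(y'-1) := Nat.mul_le_mul le_rfl (by omega)
            have := lt_of_le_of_lt (le_trans (hz y hy).2.2 hmul) (hz y' hy').2.1
            omega
          · have hmul : 4*k*y' ≤ 4*k*(y-1) := Nat.mul_le_mul le_rfl (by omega)
            have := lt_of_le_of_lt (le_trans (hz y' hy').2.2 hmul) (hz y hy).2.1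
            omega
      exact le_trans hcard (hw i₀)
  have hCcard : C.card ≤ k + 1 := by
    rcases Finset.eq_empty_or_nonempty C with hemp | ⟨y₀, hy₀⟩
    · rw [hemp]; simp
    · rw [hC, Finset.mem_filter] at hy₀
      have hG1 : (G : ℕ) + 1 < n := by
        have h1 := hy₀.2
        rw [Fin.lt_def] at h1
        have := (t y₀).isLt
        omega
      set i₁ : Fin n := ⟨(G : ℕ) + 1, hG1⟩ with hi₁
      have hzex : ∀ y, ∃ z : WkVert k, y ∈ C →
          (z ∈ B i₁ ∧ 4*k*(y-1) < (z : ℕ × ℕ).2 ∧ (z : ℕ × ℕ).2 ≤ 4*k*y) := by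
        intro y
        by_cases hy : y ∈ C
        · rw [hC, Finset.mem_filter, Finset.mem_Icc] at hy
          obtain ⟨⟨hy1, hy2⟩, hty⟩ := hy
          obtain ⟨z, hz⟩ := stairEscape hd hk hy1 hy2 hx₁1 hx₁2 (t y) i₁
            (ht y hy1 hy2).2
            (Or.inr ⟨fun v a hva hvx => by
                have haH : a ∈ H x₁ := (hHmem x₁ a).2 ⟨v, hva, hvx⟩
                have h1 : a ≤ g x₁ := (hg x₁ hx₁1 hx₁2).2 a haH
                rw [hx₁G] at h1
                rw [Fin.le_def] at h1 ⊢
                simp only [hi₁]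
                omega,
              by
                rw [Fin.lt_def] at hty
                rw [Fin.le_def]
                simp only [hi₁]
                omega⟩)
          exact ⟨z, fun _ => hz⟩
        · exact ⟨v11, fun h => absurd h hy⟩
      choose z hz using hzex
      have hcard : C.card ≤ (B i₁).card := by
        apply Finset.card_le_card_of_injOn z
        · intro y hy
          exact (hz y hy).1
        · intro y hy y' hy' he
          by_contra hne
          have hcol : (z y : ℕ × ℕ).2 = (z y' : ℕ × ℕ).2 := by rw [he]
          rcases lt_or_gt_of_ne hne with hlt | hlt
          · have hmul : 4*k*y ≤ 4*k*(y'-1) := Nat.mul_le_mul le_rfl (by omega)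
            have := lt_of_le_of_lt (le_trans (hz y hy).2.2 hmul) (hz y' hy').2.1
            omega
          · have hmul : 4*k*y' ≤ 4*k*(y-1) := Nat.mul_le_mul le_rfl (by omega)
            have := lt_of_le_of_lt (le_trans (hz y' hy').2.2 hmul) (hz y hy).2.1
            omega
      exact le_trans hcard (hw i₁)
  -- every hair is early or late : contradiction by counting
  have hsub : Finset.Icc 1 (3*k+6) ⊆ A ∪ C := by
    intro y hy
    obtain ⟨hy1, hy2⟩ := Finset.mem_Icc.1 hy
    rw [Finset.mem_union, hA, hC, Finset.mem_filter, Finset.mem_filter]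
    rcases hmid y hy1 hy2 with h | h
    · exact Or.inl ⟨hy, h⟩
    · exact Or.inr ⟨hy, h⟩
  have htotal : 3*k+6 ≤ A.card + C.card := by
    calc 3*k+6 = (Finset.Icc 1 (3*k+6)).card := by rw [Nat.card_Icc]; omega
    _ ≤ (A ∪ C).card := Finset.card_le_card hsub
    _ ≤ A.card + C.card := Finset.card_union_le _ _
  omega

theorem stmt15 (k : ℕ) (hk : 1 ≤ k) : k + 1 ≤ pathwidth (Wk k) := by
  rw [pathwidth]
  apply le_csInf
  · refine ⟨Fintype.card (WkVert k), 1, fun _ => Finset.univ, ⟨?_, ?_, ?_⟩, ?_⟩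
    · exact fun v => ⟨0, Finset.mem_univ v⟩
    · exact fun u v _ => ⟨0, Finset.mem_univ u, Finset.mem_univ v⟩
    · exact fun v i j l _ _ _ _ => Finset.mem_univ v
    · intro i
      rw [Finset.card_univ]
      omega
  · rintro w ⟨n, B, hd, hb⟩
    by_contra hlt
    push_neg at hlt
    exact wk_main hk hd (fun i => le_trans (hb i) (by omega))
end

section
/- For every integer k ≥ 0, every 2-layer k-planar graph has pathwidth at most k + 1. -/
/-!
Sweep the edges of a 2-layer drawing in lexicographic order of the positions of their
`X`-endpoint and then their `Y`-endpoint, and give the edge `e` the bag of all vertices having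
an incident edge at or before `e` and one at or after `e`; isolated vertices get bags of their
own. The edges at an `X`-vertex are consecutive in this order, so besides the endpoints `x, y`
of `e` the bag only contains `Y`-vertices `v`. If `v` lies left of `y`, the later edge at `v`
has its `X`-endpoint right of `x` and crosses `e`; if `v` lies right of `y`, the earlier edge
at `v` crosses `e`. Distinct `v` give distinct crossing edges, so every bag has at most
`k + 2` vertices.
-/

open Finset

section PathDecomposition

variable {V : Type*} (G : SimpleGraph V) {w : ℕ}

theorem pathwidth_le_of_bags {ι : Type*} [LinearOrder ι] [Finite ι]
    (B : ι → Finset V) (hcover : ∀ v, ∃ i, v ∈ B i)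
    (hadj : ∀ u v, G.Adj u v → ∃ i, u ∈ B i ∧ v ∈ B i)
    (hconv : ∀ v i j l, i ≤ j → j ≤ l → v ∈ B i → v ∈ B l → v ∈ B j)
    (hcard : ∀ i, #(B i) ≤ w + 1) : pathwidth G ≤ w := by
  have := Fintype.ofFinite ι
  let e := Fintype.orderIsoFinOfCardEq ι rfl
  refine Nat.sInf_le ⟨_, B ∘ e, ⟨fun v => ?_, fun u v huv => ?_, fun v i j l hij hjl => ?_⟩,
    fun i => hcard _⟩
  · obtain ⟨i, hi⟩ := hcover v
    exact ⟨e.symm i, by simpa using hi⟩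
  · obtain ⟨i, hu, hv⟩ := hadj u v huv
    exact ⟨e.symm i, by simpa using hu, by simpa using hv⟩
  · exact hconv v _ _ _ (e.monotone hij) (e.monotone hjl)

theorem pathwidth_le_of_edge_bags [Finite V] {ι : Type*} [LinearOrder ι] [Finite ι]
    (B : ι → Finset V) (hadj : ∀ u v, G.Adj u v → ∃ i, u ∈ B i ∧ v ∈ B i)
    (hconv : ∀ v i j l, i ≤ j → j ≤ l → v ∈ B i → v ∈ B l → v ∈ B j)
    (hcard : ∀ i, #(B i) ≤ w + 1) : pathwidth G ≤ w := by
  classical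
  obtain ⟨n, ⟨σ⟩⟩ := Finite.exists_equiv_fin V
  let _ : LinearOrder V := LinearOrder.lift' σ σ.injective
  have : Finite (ι ⊕ₗ V) := inferInstanceAs (Finite (ι ⊕ V))
  -- vertices in no bag get singleton bags of their own, after all bags indexed by `ι`
  let C : V → Finset V := fun v => if ∃ i, v ∈ B i then ∅ else {v}
  have mem_C {u v : V} (h : v ∈ C u) : v = u ∧ ¬∃ i, v ∈ B i := by
    by_cases hu : ∃ i, u ∈ B i <;> simp_all [C]
  let B' : ι ⊕ₗ V → Finset V := Sum.elim B C
  refine pathwidth_le_of_bags G B' (fun v => ?_) (fun u v huv => ?_) ?_ ?_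
  · by_cases h : ∃ i, v ∈ B i
    · obtain ⟨i, hi⟩ := h
      exact ⟨.inl i, hi⟩
    · exact ⟨.inr v, by simp [B', C, h]⟩
  · obtain ⟨i, h⟩ := hadj u v huv
    exact ⟨.inl i, h⟩
  · rintro v (i | i) (j | j) (l | l) hij hjl hi hl <;>
      simp only [B', Sum.elim_inl, Sum.elim_inr] at hi hl ⊢
    · exact hconv v i j l (Sum.Lex.inl_le_inl_iff.1 hij) (Sum.Lex.inl_le_inl_iff.1 hjl) hi hl
    · exact absurd ⟨i, hi⟩ (mem_C hl).2
    · exact absurd hjl Sum.Lex.not_inr_le_inl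
    · exact absurd ⟨i, hi⟩ (mem_C hl).2
    · exact absurd hij Sum.Lex.not_inr_le_inl
    · exact absurd hij Sum.Lex.not_inr_le_inl
    · exact absurd hjl Sum.Lex.not_inr_le_inl
    · obtain rfl := (mem_C hi).1
      obtain rfl := (mem_C hl).1
      rwa [le_antisymm (Sum.Lex.inr_le_inr_iff.1 hjl) (Sum.Lex.inr_le_inr_iff.1 hij)]
  · rintro (i | v)
    · exact hcard i
    · simp only [B', C, Sum.elim_inr]
      split_ifs <;> simp

end PathDecomposition

section IntervalBag

variable {V ι : Type*} [DecidableEq V] [LinearOrder ι] [Fintype ι] {S : ι → Finset V}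

def intervalBag (S : ι → Finset V) (i : ι) : Finset V :=
  ({j | j ≤ i} : Finset ι).biUnion S ∩ ({l | i ≤ l} : Finset ι).biUnion S

theorem mem_intervalBag {i : ι} {v : V} :
    v ∈ intervalBag S i ↔ (∃ j ≤ i, v ∈ S j) ∧ ∃ l, i ≤ l ∧ v ∈ S l := by
  simp [intervalBag]

theorem subset_intervalBag (i : ι) : S i ⊆ intervalBag S i :=
  fun _ hv => mem_intervalBag.2 ⟨⟨i, le_rfl, hv⟩, i, le_rfl, hv⟩

theorem mem_intervalBag_of_le_of_le {i j l : ι} {v : V} (hij : i ≤ j) (hjl : j ≤ l)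
    (hi : v ∈ intervalBag S i) (hl : v ∈ intervalBag S l) : v ∈ intervalBag S j := by
  obtain ⟨⟨a, hai, ha⟩, -⟩ := mem_intervalBag.1 hi
  obtain ⟨-, b, hlb, hb⟩ := mem_intervalBag.1 hl
  exact mem_intervalBag.2 ⟨⟨a, hai.trans hij, ha⟩, b, hjl.trans hlb, hb⟩

theorem pathwidth_le_of_segments [Finite V] (G : SimpleGraph V) {w : ℕ}
    (hadj : ∀ u v, G.Adj u v → ∃ i, u ∈ S i ∧ v ∈ S i)
    (hcard : ∀ i, #(intervalBag S i) ≤ w + 1) : pathwidth G ≤ w := by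
  refine pathwidth_le_of_edge_bags G (intervalBag S) (fun u v huv => ?_)
    (fun v i j l => mem_intervalBag_of_le_of_le) hcard
  obtain ⟨i, hu, hv⟩ := hadj u v huv
  exact ⟨i, subset_intervalBag i hu, subset_intervalBag i hv⟩

end IntervalBag

namespace TwoLayerDrawing

variable {V : Type*} {G : SimpleGraph V} {X Y : Finset V}

protected theorem finite (D : TwoLayerDrawing G X Y) : Finite V := by
  classical
  exact Set.finite_univ_iff.1 <| (X ∪ Y).finite_toSet.subset fun v _ => by simpa using D.cover v

variable (D : TwoLayerDrawing G X Y)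

/-- The edges of `G`, oriented from `X` to `Y`. The drawing enters only through the linear order
on them: lexicographic in the positions of the `X`-endpoint and then of the `Y`-endpoint. -/
def Edge (_ : TwoLayerDrawing G X Y) : Type _ :=
  {p : V × V // p.1 ∈ X ∧ p.2 ∈ Y ∧ G.Adj p.1 p.2}

namespace Edge

variable {D}

def x (e : D.Edge) : V := e.1.1

def y (e : D.Edge) : V := e.1.2

theorem x_mem (e : D.Edge) : e.x ∈ X := e.2.1

theorem y_mem (e : D.Edge) : e.y ∈ Y := e.2.2.1

theorem adj (e : D.Edge) : G.Adj e.x e.y := e.2.2.2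

def sym (e : D.Edge) : Sym2 V := s(e.x, e.y)

theorem sym_injective : Function.Injective (sym : D.Edge → Sym2 V) := by
  intro a b h
  rcases Sym2.eq_iff.1 h with ⟨hx, hy⟩ | ⟨hx, -⟩
  · exact Subtype.ext (Prod.ext hx hy)
  · exact absurd ⟨a.x_mem, hx ▸ b.y_mem⟩ (D.disj _)

def key (e : D.Edge) : ℕ ×ₗ ℕ := toLex (D.pos e.x, D.pos e.y)

theorem key_injective : Function.Injective (key : D.Edge → ℕ ×ₗ ℕ) := by
  intro a b h
  simp only [key, toLex_inj, Prod.ext_iff] at h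
  exact Subtype.ext
    (Prod.ext (D.bijX.injOn a.x_mem b.x_mem h.1) (D.bijY.injOn a.y_mem b.y_mem h.2))

instance : LinearOrder D.Edge := LinearOrder.lift' key key_injective

instance : Finite D.Edge := by
  have := D.finite
  unfold TwoLayerDrawing.Edge
  infer_instance

noncomputable instance : Fintype D.Edge := Fintype.ofFinite _

theorem le_iff {a b : D.Edge} :
    a ≤ b ↔ D.pos a.x < D.pos b.x ∨ D.pos a.x = D.pos b.x ∧ D.pos a.y ≤ D.pos b.y :=
  Prod.Lex.toLex_le_toLex

def ends [DecidableEq V] (e : D.Edge) : Finset V := {e.x, e.y}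

theorem x_eq_of_le_of_le {a e b : D.Edge} (hae : a ≤ e) (heb : e ≤ b) (hab : a.x = b.x) :
    e.x = a.x := by
  rw [le_iff] at hae heb
  rw [← hab] at heb
  exact D.bijX.injOn e.x_mem a.x_mem (by omega)

theorem crosses_of_le_of_le {a e b : D.Edge} (hae : a ≤ e) (heb : e ≤ b) (hab : a.y = b.y)
    (hne : a.y ≠ e.y) : D.Crosses e.sym a.sym ∨ D.Crosses e.sym b.sym := by
  have hpos : D.pos a.y ≠ D.pos e.y := fun h => hne (D.bijY.injOn a.y_mem e.y_mem h)
  rw [le_iff] at hae heb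
  rw [← hab] at heb
  rcases hpos.lt_or_gt with hlt | hgt
  · exact .inr ⟨e.x, e.y, b.x, b.y, e.x_mem, b.x_mem, e.y_mem, b.y_mem, rfl, rfl,
      .inl ⟨by omega, hab ▸ hlt⟩⟩
  · exact .inl ⟨e.x, e.y, a.x, a.y, e.x_mem, a.x_mem, e.y_mem, a.y_mem, rfl, rfl,
      .inr ⟨by omega, hgt⟩⟩

variable [DecidableEq V]

theorem exists_crosses_of_mem_intervalBag {e : D.Edge} {v : V}
    (hv : v ∈ intervalBag ends e) (hx : v ≠ e.x) (hy : v ≠ e.y) :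
    ∃ c : D.Edge, c.y = v ∧ D.Crosses e.sym c.sym := by
  obtain ⟨⟨a, hae, ha⟩, b, heb, hb⟩ := mem_intervalBag.1 hv
  simp only [ends, mem_insert, mem_singleton] at ha hb
  rcases ha with rfl | rfl <;> rcases hb with hb | hb
  · exact absurd (x_eq_of_le_of_le hae heb hb).symm hx
  · exact absurd ⟨a.x_mem, hb ▸ b.y_mem⟩ (D.disj _)
  · exact absurd ⟨hb ▸ b.x_mem, a.y_mem⟩ (D.disj _)
  · rcases crosses_of_le_of_le hae heb hb hy with h | h
    · exact ⟨a, rfl, h⟩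
    · exact ⟨b, hb.symm, h⟩

theorem card_intervalBag_le {k : ℕ} (hk : D.IsKPlanar k) (e : D.Edge) :
    #(intervalBag ends e) ≤ k + 2 := by
  have := D.finite
  have hcross : ∀ v ∈ intervalBag ends e \ e.ends,
      ∃ c : D.Edge, c.y = v ∧ D.Crosses e.sym c.sym := by
    intro v hv
    simp only [mem_sdiff, ends, mem_insert, mem_singleton, not_or] at hv
    exact exists_crosses_of_mem_intervalBag hv.1 hv.2.1 hv.2.2
  have : Nonempty D.Edge := ⟨e⟩
  choose! c hcy hc using hcross
  have hsdiff : #(intervalBag ends e \ e.ends) ≤ k := by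
    rw [← Set.ncard_coe_finset]
    refine (Set.ncard_le_ncard_of_injOn (t := {e' | e' ∈ G.edgeSet ∧ D.Crosses e.sym e'})
      (fun v => (c v).sym) (fun v hv => ⟨(c v).adj, hc v hv⟩) (fun v hv w hw h => ?_)
      (Set.toFinite _)).trans (hk e.sym e.adj)
    rw [← hcy v hv, ← hcy w hw, sym_injective h]
  calc #(intervalBag ends e)
      ≤ #(intervalBag ends e \ e.ends) + #e.ends := card_le_card_sdiff_add_card
    _ ≤ k + 2 := add_le_add hsdiff card_le_two

end Edge

theorem exists_mem_ends_of_adj [DecidableEq V] {u v : V} (h : G.Adj u v) :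
    ∃ e : D.Edge, u ∈ e.ends ∧ v ∈ e.ends := by
  rcases D.bipart u v h with ⟨hu, hv⟩ | ⟨hu, hv⟩
  · exact ⟨⟨(u, v), hu, hv, h⟩, by simp [Edge.ends, Edge.x], by simp [Edge.ends, Edge.y]⟩
  · exact ⟨⟨(v, u), hv, hu, h.symm⟩, by simp [Edge.ends, Edge.y], by simp [Edge.ends, Edge.x]⟩

theorem pathwidth_le {k : ℕ} (hk : D.IsKPlanar k) : pathwidth G ≤ k + 1 := by
  classical
  have := D.finite
  exact pathwidth_le_of_segments G (fun _ _ => D.exists_mem_ends_of_adj)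
    (Edge.card_intervalBag_le hk)

end TwoLayerDrawing

theorem stmt17 (k : ℕ) {V : Type*} (G : SimpleGraph V) (h : IsTwoLayerKPlanar G k) :
    pathwidth G ≤ k + 1 := by
  obtain ⟨X, Y, D, hD⟩ := h
  exact D.pathwidth_le hD
end
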